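/- For positive definite matrices A, B and arbitrary matrix C, and α ∈ [0,1], the map L(α; A,B,C) = C* B^{-1/2}(B^{1/2} A⁻¹ B^{1/2})^α B^{-1/2} C is jointly convex in (A,B,C). -/

import Mathlib

open Matrix
open scoped ComplexOrder Classical

/-- Square root of a positive semidefinite matrix, extended by `0`. -/
noncomputable def msqrt {n : Type*} [Fintype n] [DecidableEq n] (A : Matrix n n ℂ) :
    Matrix n n ℂ :=
  if h : A.PosSemidef then h.1.cfc Real.sqrt else 0

/-- Real power of a Hermitian matrix via the functional calculus, extended by `0`. -/
noncomputable def mrpow {n : Type*} [Fintype n] [DecidableEq n] (A : Matrix n n ℂ) (α : ℝ) :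
    Matrix n n ℂ :=
  if h : A.IsHermitian then h.cfc (fun t => t ^ α) else 0

/-- A completely positive linear map between matrix algebras (Choi–Kraus form). -/
def IsCPMap {n m : Type*} [Fintype n] [Fintype m] (Φ : Matrix n n ℂ → Matrix m m ℂ) : Prop :=
  ∃ (r : ℕ) (C : Fin r → Matrix n m ℂ), ∀ X, Φ X = ∑ i, (C i)ᴴ * X * C i

/-- The matrix geometric mean `A^{1/2} (A^{-1/2} B A^{-1/2})^{1/2} A^{1/2}`. -/
noncomputable def geomMean {n : Type*} [Fintype n] [DecidableEq n] (A B : Matrix n n ℂ) :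
    Matrix n n ℂ :=
  msqrt A * msqrt ((msqrt A)⁻¹ * B * (msqrt A)⁻¹) * msqrt A

/-- The weighted geometric mean `B^{1/2} (B^{-1/2} A B^{-1/2})^α B^{1/2}`. -/
noncomputable def wgeomMean {n : Type*} [Fintype n] [DecidableEq n] (α : ℝ)
    (A B : Matrix n n ℂ) : Matrix n n ℂ :=
  msqrt B * mrpow ((msqrt B)⁻¹ * A * (msqrt B)⁻¹) α * msqrt B

/-- The harmonic mean `2 (A⁻¹ + B⁻¹)⁻¹`. -/
noncomputable def harmMean {n : Type*} [Fintype n] [DecidableEq n] (A B : Matrix n n ℂ) :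
    Matrix n n ℂ :=
  (2 : ℂ) • (A⁻¹ + B⁻¹)⁻¹

/-!
Write `L = C* G⁻¹ C` with `G = wgeomMean α A B`, the weighted geometric mean `B #_α A`. The map
`(M, C) ↦ C* M⁻¹ C` is jointly convex (the Schur complement of `[[M, C], [C*, C* M⁻¹ C]] ≥ 0`
is `0`) and `M ↦ M⁻¹` is operator antitone, so it suffices that `G` is jointly concave in `(A, B)`.

For `α = 0, 1` the mean `G` is linear. If `G_a` and `G_b` are concave, so is `G_c` for
`c = (a + b) / 2` (Ando's argument): `G_c G_a⁻¹ G_c = G_b`, so convexity of `C* M⁻¹ C` applied to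
the convex combination `R` of the `G_c` gives `R G_a(mix)⁻¹ R ≤ G_b(mix) = K G_a(mix)⁻¹ K` with
`K = G_c(mix)`, and operator monotonicity of the square root turns this into `R ≤ K`. Hence `G`
is concave for dyadic exponents, and by continuity in the exponent for all `α ∈ [0, 1]`.
-/

open Set Filter Topology
open scoped MatrixOrder

lemma isClosed_setOf_concaveOn_of_continuous {X E β : Type*} [TopologicalSpace X]
    [AddCommMonoid E] [SMul ℝ E] [TopologicalSpace β] [AddCommMonoid β] [PartialOrder β]
    [OrderClosedTopology β] [ContinuousAdd β] [SMul ℝ β] [ContinuousConstSMul ℝ β] {s : Set E}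
    {F : X → E → β} (hF : ∀ x ∈ s, Continuous fun γ => F γ x) :
    IsClosed {γ | ConcaveOn ℝ s (F γ)} := by
  -- `F · x` is only continuous for `x ∈ s`, so pass to the indicator of `s`.
  have hset : {γ | ConcaveOn ℝ s (F γ)} =
      (fun γ => s.indicator (F γ)) ⁻¹' {f | ConcaveOn ℝ s f} := by
    ext γ
    exact ⟨fun h => h.congr fun x hx => (indicator_of_mem hx _).symm,
      fun h => h.congr fun x hx => indicator_of_mem hx _⟩
  rw [hset]
  refine isClosed_setOfPred_concaveOn.preimage (continuous_pi fun x => ?_)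
  by_cases hx : x ∈ s
  · simpa only [indicator_of_mem hx] using hF x hx
  · simpa only [indicator_of_notMem hx] using continuous_const

lemma Icc_subset_of_isClosed_of_add_div_two_mem {T : Set ℝ} (hT : IsClosed T) (h0 : 0 ∈ T)
    (h1 : 1 ∈ T) (hmid : ∀ a ∈ T, ∀ b ∈ T, (a + b) / 2 ∈ T) : Icc 0 1 ⊆ T := by
  have hdyadic (k : ℕ) : ∀ j : ℕ, j ≤ 2 ^ k → (j : ℝ) / 2 ^ k ∈ T := by
    induction k with
    | zero =>
      intro j hj
      interval_cases j <;> simpa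
    | succ k ih =>
      intro j hj
      rw [pow_succ] at hj
      obtain ⟨i, rfl | rfl⟩ := Nat.even_or_odd' j
      · convert ih i (by omega) using 1
        push_cast [pow_succ]
        field_simp
      · convert hmid _ (ih i (by omega)) _ (ih (i + 1) (by omega)) using 1
        push_cast [pow_succ]
        field_simp
        ring
  rintro γ ⟨hγ0, hγ1⟩
  have hlim : Tendsto (fun k : ℕ => (⌊γ * 2 ^ k⌋₊ : ℝ) / 2 ^ k) atTop (𝓝 γ) :=
    (tendsto_nat_floor_mul_div_atTop hγ0).comp (tendsto_pow_atTop_atTop_of_one_lt one_lt_two)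
  refine hT.mem_of_tendsto hlim (Eventually.of_forall fun k => hdyadic k _ ?_)
  exact_mod_cast Nat.floor_le_of_le (by nlinarith [pow_pos (two_pos : (0 : ℝ) < 2) k])

lemma IsSelfAdjoint.le_of_mul_self_le_mul_self {A : Type*} [CStarAlgebra A] [PartialOrder A]
    [StarOrderedRing A] {a b : A} (ha : IsSelfAdjoint a) (hb : 0 ≤ b) (h : a * a ≤ b * b) :
    a ≤ b :=
  calc a ≤ CFC.abs a := by
        rw [← sub_nonneg, CFC.abs_sub_self a ha]
        exact smul_nonneg zero_le_two (CFC.negPart_nonneg a)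
    _ = CFC.sqrt (a * a) := by rw [CFC.abs, ha.star_eq]
    _ ≤ CFC.sqrt (b * b) := CFC.sqrt_le_sqrt _ _ h
    _ = b := CFC.sqrt_mul_self b hb

namespace Matrix

lemma convex_setOf_posDef {n : Type*} : Convex ℝ {A : Matrix n n ℂ | A.PosDef} := by
  intro A hA B hB a b ha hb hab
  rcases ha.eq_or_lt with rfl | ha
  · simpa [show b = 1 by linarith] using hB
  · exact (hA.smul ha).add_posSemidef (hB.posSemidef.smul hb)

variable {n m : Type*} [Fintype n] [Fintype m]

lemma conjTranspose_mul_mul_le_conjTranspose_mul_mul {X Y : Matrix n n ℂ} (h : X ≤ Y)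
    (C : Matrix n m ℂ) : Cᴴ * X * C ≤ Cᴴ * Y * C := by
  simpa only [le_iff, Matrix.mul_sub, Matrix.sub_mul] using
    (le_iff.1 h).conjTranspose_mul_mul_same C

variable [DecidableEq n]

lemma PosDef.conjugate {A S : Matrix n n ℂ} (hA : A.PosDef) (hS : S.IsHermitian)
    (hSu : IsUnit S) : (S * A * S).PosDef := by
  simpa [hS.eq] using hA.conjTranspose_mul_mul_same (mulVec_injective_iff_isUnit.2 hSu)

lemma PosDef.inv_anti {M N : Matrix n n ℂ} (hN : N.PosDef) (h : N ≤ M) : M⁻¹ ≤ N⁻¹ := by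
  have hM : M.PosDef := by simpa using hN.add_posSemidef h
  open scoped Norms.L2Operator in
  simpa using CStarAlgebra.inv_le_inv (a := hN.isUnit.unit) (b := hM.isUnit.unit)
    hN.posSemidef.nonneg h

open scoped Norms.L2Operator in
lemma _root_.IsSelfAdjoint.le_of_mul_inv_mul_le {M K R : Matrix n n ℂ} (hR : IsSelfAdjoint R)
    (hM : M.PosDef) (hK : 0 ≤ K) (h : R * M⁻¹ * R ≤ K * M⁻¹ * K) : R ≤ K := by
  set T := CFC.sqrt M⁻¹
  have hT0 : 0 ≤ T := CFC.sqrt_nonneg _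
  have hTT : T * T = M⁻¹ := CFC.sqrt_mul_sqrt_self _ hM.inv.posSemidef.nonneg
  have hTdet : IsUnit T.det :=
    (isUnit_iff_isUnit_det T).1 (hM.inv.isStrictlyPositive.sqrt).isUnit
  have hsq : (T * R * T) * (T * R * T) ≤ (T * K * T) * (T * K * T) := by
    simpa only [← hTT, mul_assoc] using hT0.isSelfAdjoint.conjugate_le_conjugate h
  have hle : T * R * T ≤ T * K * T :=
    (hR.conjugate_self hT0.isSelfAdjoint).le_of_mul_self_le_mul_self
      (conjugate_nonneg_of_nonneg hK hT0) hsq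
  simpa only [mul_assoc, mul_nonsing_inv _ hTdet, nonsing_inv_mul_cancel_left _ _ hTdet,
    mul_one] using hT0.posSemidef.1.inv.isSelfAdjoint.conjugate_le_conjugate hle

lemma convexOn_conjTranspose_mul_inv_mul :
    ConvexOn ℝ ({M : Matrix n n ℂ | M.PosDef} ×ˢ univ)
      (fun p : Matrix n n ℂ × Matrix n m ℂ => p.2ᴴ * p.1⁻¹ * p.2) := by
  refine ⟨convex_setOf_posDef.prod convex_univ, ?_⟩
  have hblock {M : Matrix n n ℂ} (C : Matrix n m ℂ) (hM : M.PosDef) :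
      (fromBlocks M C Cᴴ (Cᴴ * M⁻¹ * C)).PosSemidef := by
    have := hM.isUnit.invertible
    exact (PosDef.fromBlocks₁₁ C _ hM).2 (by simpa using PosSemidef.zero)
  rintro ⟨M, C⟩ ⟨hM, -⟩ ⟨N, D⟩ ⟨hN, -⟩ a b ha hb hab
  have hmix : (a • M + b • N).PosDef := convex_setOf_posDef hM hN ha hb hab
  have := hmix.isUnit.invertible
  have hsum := ((hblock C hM).smul ha).add ((hblock D hN).smul hb)
  rw [fromBlocks_smul, fromBlocks_smul, fromBlocks_add] at hsum
  exact (PosDef.fromBlocks₁₁ (a • C + b • D) _ hmix).1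
    (by simpa only [conjTranspose_add, conjTranspose_smul, star_trivial] using hsum)

lemma _root_.ConcaveOn.convexOn_conjTranspose_mul_inv_mul {E : Type*} [AddCommGroup E]
    [Module ℝ E] {s : Set E} {G : E → Matrix n n ℂ} (hG : ConcaveOn ℝ s G)
    (hpos : ∀ x ∈ s, (G x).PosDef) :
    ConvexOn ℝ (s ×ˢ univ) fun p : E × Matrix n m ℂ => p.2ᴴ * (G p.1)⁻¹ * p.2 := by
  refine ⟨hG.1.prod convex_univ, ?_⟩
  rintro ⟨x, C⟩ ⟨hx, -⟩ ⟨y, D⟩ ⟨hy, -⟩ a b ha hb hab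
  have hmix : (a • G x + b • G y).PosDef :=
    convex_setOf_posDef (hpos x hx) (hpos y hy) ha hb hab
  calc (a • C + b • D)ᴴ * (G (a • x + b • y))⁻¹ * (a • C + b • D)
      ≤ (a • C + b • D)ᴴ * (a • G x + b • G y)⁻¹ * (a • C + b • D) :=
        conjTranspose_mul_mul_le_conjTranspose_mul_mul (hmix.inv_anti (hG.2 hx hy ha hb hab)) _
    _ ≤ a • (Cᴴ * (G x)⁻¹ * C) + b • (Dᴴ * (G y)⁻¹ * D) :=
        Matrix.convexOn_conjTranspose_mul_inv_mul.2 (x := (G x, C)) (y := (G y, D))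
          ⟨hpos x hx, trivial⟩ ⟨hpos y hy, trivial⟩ ha hb hab

lemma convexComb_le_of_mul_inv_mul_eq {M₁ M₂ M K₁ K₂ K N₁ N₂ N : Matrix n n ℂ}
    (hM₁ : M₁.PosDef) (hM₂ : M₂.PosDef) (hM : M.PosDef) (hK₁ : K₁.IsHermitian)
    (hK₂ : K₂.IsHermitian) (hK : 0 ≤ K) (h₁ : K₁ * M₁⁻¹ * K₁ = N₁) (h₂ : K₂ * M₂⁻¹ * K₂ = N₂)
    (h : K * M⁻¹ * K = N) {s t : ℝ} (hs : 0 ≤ s) (ht : 0 ≤ t) (hst : s + t = 1)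
    (hMle : s • M₁ + t • M₂ ≤ M) (hNle : s • N₁ + t • N₂ ≤ N) : s • K₁ + t • K₂ ≤ K := by
  have hR : (s • K₁ + t • K₂).IsHermitian :=
    ((IsSelfAdjoint.all s).smul hK₁.isSelfAdjoint).add
      ((IsSelfAdjoint.all t).smul hK₂.isSelfAdjoint)
  have hconvex := convexOn_conjTranspose_mul_inv_mul.2 (x := (M₁, K₁)) (y := (M₂, K₂))
    ⟨hM₁, trivial⟩ ⟨hM₂, trivial⟩ hs ht hst
  simp only [Prod.smul_mk, Prod.mk_add_mk, hK₁.eq, hK₂.eq, hR.eq, h₁, h₂] at hconvex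
  refine hR.isSelfAdjoint.le_of_mul_inv_mul_le hM hK ?_
  calc (s • K₁ + t • K₂) * M⁻¹ * (s • K₁ + t • K₂)
      ≤ (s • K₁ + t • K₂) * (s • M₁ + t • M₂)⁻¹ * (s • K₁ + t • K₂) := by
        simpa only [hR.eq] using conjTranspose_mul_mul_le_conjTranspose_mul_mul
          ((convex_setOf_posDef hM₁ hM₂ hs ht hst).inv_anti hMle) (s • K₁ + t • K₂)
    _ ≤ s • N₁ + t • N₂ := hconvex
    _ ≤ N := hNle
    _ = K * M⁻¹ * K := h.symm

lemma PosSemidef.msqrt_eq_sqrt {A : Matrix n n ℂ} (hA : A.PosSemidef) :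
    msqrt A = CFC.sqrt A := by
  rw [msqrt, dif_pos hA, ← hA.1.cfc_eq, CFC.sqrt_eq_real_sqrt A hA.nonneg, cfcₙ_eq_cfc]

lemma PosSemidef.mrpow_eq_rpow {A : Matrix n n ℂ} (hA : A.PosSemidef) (γ : ℝ) :
    mrpow A γ = A ^ γ := by
  rw [mrpow, dif_pos hA.1, ← hA.1.cfc_eq, CFC.rpow_eq_cfc_real hA.nonneg]

lemma PosDef.inv_rpow {A : Matrix n n ℂ} (hA : A.PosDef) (γ : ℝ) : (A ^ γ)⁻¹ = A ^ (-γ) :=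
  inv_eq_right_inv (CFC.rpow_mul_rpow_neg γ hA.isStrictlyPositive)

lemma PosDef.rpow_inv {A : Matrix n n ℂ} (hA : A.PosDef) (γ : ℝ) : A⁻¹ ^ γ = A ^ (-γ) := by
  simpa using (CFC.rpow_neg hA.isUnit.unit γ hA.posSemidef.nonneg).symm

lemma PosDef.continuous_mrpow {A : Matrix n n ℂ} (hA : A.PosDef) : Continuous (mrpow A) := by
  have hdiag : mrpow A = fun γ => (hA.1.eigenvectorUnitary : Matrix n n ℂ) *
      diagonal (fun i => ((hA.1.eigenvalues i ^ γ : ℝ) : ℂ)) *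
      star (hA.1.eigenvectorUnitary : Matrix n n ℂ) := by
    funext γ
    rw [mrpow, dif_pos hA.1]
    rfl
  rw [hdiag]
  refine (continuous_const.matrix_mul (continuous_pi fun i => ?_).matrix_diagonal).matrix_mul
    continuous_const
  exact Complex.continuous_ofReal.comp (Real.continuous_const_rpow (hA.eigenvalues_pos i).ne')

lemma PosDef.conjugate_rpow_mul_inv_mul {S Y : Matrix n n ℂ} (hY : Y.PosDef) (hS : IsUnit S.det)
    {a b c : ℝ} (h : a + b = 2 * c) :
    S * Y ^ c * S * (S * Y ^ a * S)⁻¹ * (S * Y ^ c * S) = S * Y ^ b * S := by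
  calc S * Y ^ c * S * (S * Y ^ a * S)⁻¹ * (S * Y ^ c * S)
      = S * (Y ^ c * Y ^ (-a) * Y ^ c) * S := by
        simp only [mul_inv_rev, hY.inv_rpow, mul_assoc, mul_nonsing_inv_cancel_left _ _ hS,
          nonsing_inv_mul_cancel_left _ _ hS]
    _ = S * Y ^ b * S := by
        rw [← CFC.rpow_add hY.isUnit, ← CFC.rpow_add hY.isUnit]
        congr 3
        linarith

section wgeomMean

variable {A B : Matrix n n ℂ}

lemma PosDef.isUnit_det_sqrt (hB : B.PosDef) : IsUnit (CFC.sqrt B).det :=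
  (isUnit_iff_isUnit_det _).1 hB.isStrictlyPositive.sqrt.isUnit

lemma posDef_inv_sqrt_mul_mul_inv_sqrt (hA : A.PosDef) (hB : B.PosDef) :
    ((CFC.sqrt B)⁻¹ * A * (CFC.sqrt B)⁻¹).PosDef :=
  hA.conjugate (CFC.sqrt_nonneg B).posSemidef.1.inv
    ((isUnit_iff_isUnit_det _).2 (isUnit_nonsing_inv_det _ hB.isUnit_det_sqrt))

lemma wgeomMean_eq_sqrt_mul_rpow_mul_sqrt (hA : A.PosDef) (hB : B.PosDef) (γ : ℝ) :
    wgeomMean γ A B =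
      CFC.sqrt B * ((CFC.sqrt B)⁻¹ * A * (CFC.sqrt B)⁻¹) ^ γ * CFC.sqrt B := by
  rw [wgeomMean, hB.posSemidef.msqrt_eq_sqrt,
    (posDef_inv_sqrt_mul_mul_inv_sqrt hA hB).posSemidef.mrpow_eq_rpow]

lemma wgeomMean_posDef (hA : A.PosDef) (hB : B.PosDef) (γ : ℝ) :
    (wgeomMean γ A B).PosDef := by
  rw [wgeomMean_eq_sqrt_mul_rpow_mul_sqrt hA hB]
  exact (isStrictlyPositive_iff_posDef.1 (IsStrictlyPositive.rpow _ γ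
    (posDef_inv_sqrt_mul_mul_inv_sqrt hA hB).isStrictlyPositive)).conjugate
    (CFC.sqrt_nonneg B).posSemidef.1 hB.isStrictlyPositive.sqrt.isUnit

lemma wgeomMean_zero (hA : A.PosDef) (hB : B.PosDef) : wgeomMean 0 A B = B := by
  rw [wgeomMean_eq_sqrt_mul_rpow_mul_sqrt hA hB,
    CFC.rpow_zero _ (posDef_inv_sqrt_mul_mul_inv_sqrt hA hB).posSemidef.nonneg, mul_one,
    CFC.sqrt_mul_sqrt_self B hB.posSemidef.nonneg]

lemma wgeomMean_one (hA : A.PosDef) (hB : B.PosDef) : wgeomMean 1 A B = A := by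
  rw [wgeomMean_eq_sqrt_mul_rpow_mul_sqrt hA hB,
    CFC.rpow_one _ (posDef_inv_sqrt_mul_mul_inv_sqrt hA hB).posSemidef.nonneg]
  simp only [mul_assoc, nonsing_inv_mul _ hB.isUnit_det_sqrt, mul_one,
    mul_nonsing_inv_cancel_left _ _ hB.isUnit_det_sqrt]

lemma wgeomMean_mul_inv_mul (hA : A.PosDef) (hB : B.PosDef) {a b c : ℝ} (h : a + b = 2 * c) :
    wgeomMean c A B * (wgeomMean a A B)⁻¹ * wgeomMean c A B = wgeomMean b A B := by
  simpa only [wgeomMean_eq_sqrt_mul_rpow_mul_sqrt hA hB] using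
    (posDef_inv_sqrt_mul_mul_inv_sqrt hA hB).conjugate_rpow_mul_inv_mul hB.isUnit_det_sqrt h

lemma inv_wgeomMean (hA : A.PosDef) (hB : B.PosDef) (γ : ℝ) :
    (wgeomMean γ A B)⁻¹ = (msqrt B)⁻¹ * mrpow (msqrt B * A⁻¹ * msqrt B) γ * (msqrt B)⁻¹ := by
  have hY := posDef_inv_sqrt_mul_mul_inv_sqrt hA hB
  have hYinv : ((CFC.sqrt B)⁻¹ * A * (CFC.sqrt B)⁻¹)⁻¹ = CFC.sqrt B * A⁻¹ * CFC.sqrt B := by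
    rw [mul_inv_rev, mul_inv_rev, nonsing_inv_nonsing_inv _ hB.isUnit_det_sqrt, mul_assoc]
  rw [hB.posSemidef.msqrt_eq_sqrt, ← hYinv, hY.inv.posSemidef.mrpow_eq_rpow, hY.rpow_inv,
    ← hY.inv_rpow, wgeomMean_eq_sqrt_mul_rpow_mul_sqrt hA hB, mul_inv_rev, mul_inv_rev]
  simp only [mul_assoc]

lemma continuous_wgeomMean (hA : A.PosDef) (hB : B.PosDef) :
    Continuous fun γ => wgeomMean γ A B := by
  have hY := posDef_inv_sqrt_mul_mul_inv_sqrt hA hB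
  rw [← hB.posSemidef.msqrt_eq_sqrt] at hY
  exact (continuous_const.matrix_mul hY.continuous_mrpow).matrix_mul continuous_const

lemma concaveOn_wgeomMean_add_div_two {a b : ℝ}
    (ha : ConcaveOn ℝ ({A : Matrix n n ℂ | A.PosDef} ×ˢ {B | B.PosDef})
      fun p => wgeomMean a p.1 p.2)
    (hb : ConcaveOn ℝ ({A : Matrix n n ℂ | A.PosDef} ×ˢ {B | B.PosDef})
      fun p => wgeomMean b p.1 p.2) :
    ConcaveOn ℝ ({A : Matrix n n ℂ | A.PosDef} ×ˢ {B | B.PosDef})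
      fun p => wgeomMean ((a + b) / 2) p.1 p.2 := by
  refine ⟨ha.1, ?_⟩
  rintro ⟨A₁, B₁⟩ ⟨hA₁, hB₁⟩ ⟨A₂, B₂⟩ ⟨hA₂, hB₂⟩ s t hs ht hst
  have hA := convex_setOf_posDef hA₁ hA₂ hs ht hst
  have hB := convex_setOf_posDef hB₁ hB₂ hs ht hst
  have hc : a + b = 2 * ((a + b) / 2) := by ring
  simp only [Prod.smul_mk, Prod.mk_add_mk]
  exact convexComb_le_of_mul_inv_mul_eq (wgeomMean_posDef hA₁ hB₁ a)
    (wgeomMean_posDef hA₂ hB₂ a) (wgeomMean_posDef hA hB a) (wgeomMean_posDef hA₁ hB₁ _).1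
    (wgeomMean_posDef hA₂ hB₂ _).1 (wgeomMean_posDef hA hB _).posSemidef.nonneg
    (wgeomMean_mul_inv_mul hA₁ hB₁ hc) (wgeomMean_mul_inv_mul hA₂ hB₂ hc)
    (wgeomMean_mul_inv_mul hA hB hc) hs ht hst
    (ha.2 (x := (A₁, B₁)) (y := (A₂, B₂)) ⟨hA₁, hB₁⟩ ⟨hA₂, hB₂⟩ hs ht hst)
    (hb.2 (x := (A₁, B₁)) (y := (A₂, B₂)) ⟨hA₁, hB₁⟩ ⟨hA₂, hB₂⟩ hs ht hst)

open scoped Norms.L2Operator in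
theorem concaveOn_wgeomMean {γ : ℝ} (hγ : γ ∈ Icc 0 1) :
    ConcaveOn ℝ ({A : Matrix n n ℂ | A.PosDef} ×ˢ {B | B.PosDef})
      fun p => wgeomMean γ p.1 p.2 := by
  have hconvex := (convex_setOf_posDef (n := n)).prod (convex_setOf_posDef (n := n))
  refine Icc_subset_of_isClosed_of_add_div_two_mem
    (isClosed_setOf_concaveOn_of_continuous (β := Matrix n n ℂ)
      fun p hp => continuous_wgeomMean hp.1 hp.2)
    ?_ ?_ (fun a ha b hb => concaveOn_wgeomMean_add_div_two ha hb) hγ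
  · exact ((LinearMap.snd ℝ _ _).concaveOn hconvex).congr
      fun p hp => (wgeomMean_zero hp.1 hp.2).symm
  · exact ((LinearMap.fst ℝ _ _).concaveOn hconvex).congr
      fun p hp => (wgeomMean_one hp.1 hp.2).symm

end wgeomMean

end Matrix

/-- Joint convexity of `L(α; A,B,C) = C* B^{-1/2}(B^{1/2} A⁻¹ B^{1/2})^α B^{-1/2} C`. -/
theorem weighted_lieb_ruskai_convexity {n : Type*} [Fintype n] [DecidableEq n]
    (α : ℝ) (hα0 : 0 ≤ α) (hα1 : α ≤ 1)
    (A₁ A₂ B₁ B₂ C₁ C₂ : Matrix n n ℂ)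
    (hA₁ : A₁.PosDef) (hA₂ : A₂.PosDef) (hB₁ : B₁.PosDef) (hB₂ : B₂.PosDef)
    (l : ℝ) (hl0 : 0 ≤ l) (hl1 : l ≤ 1) :
    (((l : ℂ) • (C₁ᴴ * ((msqrt B₁)⁻¹ * mrpow (msqrt B₁ * A₁⁻¹ * msqrt B₁) α * (msqrt B₁)⁻¹) * C₁) +
        (1 - (l : ℂ)) •
          (C₂ᴴ * ((msqrt B₂)⁻¹ * mrpow (msqrt B₂ * A₂⁻¹ * msqrt B₂) α * (msqrt B₂)⁻¹) * C₂)) -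
      ((l : ℂ) • C₁ + (1 - (l : ℂ)) • C₂)ᴴ *
        ((msqrt ((l : ℂ) • B₁ + (1 - (l : ℂ)) • B₂))⁻¹ *
          mrpow (msqrt ((l : ℂ) • B₁ + (1 - (l : ℂ)) • B₂) *
              ((l : ℂ) • A₁ + (1 - (l : ℂ)) • A₂)⁻¹ *
              msqrt ((l : ℂ) • B₁ + (1 - (l : ℂ)) • B₂)) α *
          (msqrt ((l : ℂ) • B₁ + (1 - (l : ℂ)) • B₂))⁻¹) *
        ((l : ℂ) • C₁ + (1 - (l : ℂ)) • C₂)).PosSemidef := by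
  have hl : 0 ≤ 1 - l := sub_nonneg.2 hl1
  have hA := convex_setOf_posDef hA₁ hA₂ hl0 hl (add_sub_cancel l 1)
  have hB := convex_setOf_posDef hB₁ hB₂ hl0 hl (add_sub_cancel l 1)
  have hconvex := (concaveOn_wgeomMean (n := n) ⟨hα0, hα1⟩).convexOn_conjTranspose_mul_inv_mul
    (m := n) fun p hp => wgeomMean_posDef hp.1 hp.2 α
  have key := hconvex.2 (x := ((A₁, B₁), C₁)) (y := ((A₂, B₂), C₂)) ⟨⟨hA₁, hB₁⟩, trivial⟩
    ⟨⟨hA₂, hB₂⟩, trivial⟩ hl0 hl (add_sub_cancel l 1)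
  simp only [Prod.smul_mk, Prod.mk_add_mk] at key
  rw [inv_wgeomMean hA₁ hB₁, inv_wgeomMean hA₂ hB₂, inv_wgeomMean hA hB] at key
  have hcoe : 1 - (l : ℂ) = ((1 - l : ℝ) : ℂ) := by push_cast; ring
  rw [← le_iff]
  simpa only [hcoe, Complex.coe_smul] using key
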